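/- arXiv:1804.00337 — 4 statements merged into one kernel-verified Lean document; each statement's English description precedes it below -/
import Mathlib

section
/- Let (X, μ) be a probability measure space arising as the attractor of an IFS {σ_0,…,σ_{N−1}} with invariant (Hutchinson) measure μ satisfying μ = (1/N)∑_i μ∘σ_i^{-1}, and define F_i : L²(X,μ) → L²(X,μ) by F_i(φ) = (1/√N)(φ∘σ_i). Then ∑_{i=0}^{N−1} F_i* F_i = id on L²(X,μ). -/
open MeasureTheory
open scoped ENNReal ComplexConjugate

/-- For an IFS `{σ_0, …, σ_{N−1}}` on a compact metric space `X` with invariant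
(Hutchinson) probability measure `μ` (i.e. `μ = (1/N) ∑ μ ∘ σᵢ⁻¹`), the operators
`Fᵢ φ = (1/√N)(φ ∘ σᵢ)` on `L²(X,μ)` satisfy `∑ Fᵢ* Fᵢ = id`. -/
theorem stmt10 {X : Type*} [MetricSpace X] [CompactSpace X] [MeasurableSpace X] [BorelSpace X]
    (N : ℕ) (hN : 1 ≤ N) (σ : Fin N → X → X) (hσ : ∀ i, Measurable (σ i))
    (μ : Measure X) [IsProbabilityMeasure μ]
    (hinv : ∀ s : Set X, MeasurableSet s → μ s = (∑ i, μ (σ i ⁻¹' s)) / N)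
    (F : Fin N → (Lp ℂ 2 μ →L[ℂ] Lp ℂ 2 μ))
    (hF : ∀ (i : Fin N) (φ : Lp ℂ 2 μ),
      (F i φ : X → ℂ) =ᵐ[μ] fun x => ((Real.sqrt N : ℂ))⁻¹ * (φ : X → ℂ) (σ i x)) :
    ∑ i, (ContinuousLinearMap.adjoint (F i)) ∘L (F i) = 1 := by
  have hNne : N ≠ 0 := Nat.one_le_iff_ne_zero.mp hN
  have hN0 : (N:ℝ≥0∞) ≠ 0 := by exact_mod_cast hNne
  have hμeq : μ = ((N:ℝ≥0∞))⁻¹ • (∑ i, Measure.map (σ i) μ) := by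
    ext s hs
    rw [Measure.smul_apply, Measure.finset_sum_apply, hinv s hs]
    simp only [Measure.map_apply (hσ _) hs]
    rw [ENNReal.div_eq_inv_mul, smul_eq_mul]
  have hs : ((Real.sqrt N : ℂ))⁻¹ * ((Real.sqrt N : ℂ))⁻¹ = (N:ℂ)⁻¹ := by
    rw [← mul_inv, ← Complex.ofReal_mul, Real.mul_self_sqrt (Nat.cast_nonneg N)]
    push_cast
    ring
  have key : ∀ φ ψ : Lp ℂ 2 μ, (∑ i, (inner ℂ (F i ψ) (F i φ) : ℂ)) = inner ℂ ψ φ := by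
    intro φ ψ
    set h : X → ℂ := fun x => inner ℂ ((ψ : X → ℂ) x) ((φ : X → ℂ) x) with hh
    have hint : Integrable h μ := L2.integrable_inner ψ φ
    have hintsum : Integrable h (∑ i, Measure.map (σ i) μ) := by
      rw [hμeq] at hint
      exact (integrable_smul_measure (ENNReal.inv_ne_zero.mpr (ENNReal.natCast_ne_top N)) (ENNReal.inv_ne_top.mpr hN0)).mp hint
    have hinti : ∀ i, Integrable h (Measure.map (σ i) μ) := fun i =>
      (integrable_finset_sum_measure.mp hintsum) i (Finset.mem_univ i)
    have step : ∀ i, (inner ℂ (F i ψ) (F i φ) : ℂ) = (N:ℂ)⁻¹ * ∫ x, h (σ i x) ∂μ := by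
      intro i
      rw [L2.inner_def, ← integral_const_mul]
      refine integral_congr_ae ?_
      filter_upwards [hF i ψ, hF i φ] with x h1 h2
      rw [h1, h2]
      simp only [hh, RCLike.inner_apply, map_mul, map_inv₀, Complex.conj_ofReal,
        RCLike.star_def]
      rw [← hs]; ring
    calc (∑ i, (inner ℂ (F i ψ) (F i φ) : ℂ))
        = (N:ℂ)⁻¹ * ∑ i, ∫ x, h x ∂(Measure.map (σ i) μ) := by
          rw [Finset.mul_sum]
          refine Finset.sum_congr rfl fun i _ => ?_
          rw [step i, integral_map (hσ i).aemeasurable (hinti i).1]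
      _ = (N:ℂ)⁻¹ * ∫ x, h x ∂(∑ i, Measure.map (σ i) μ) := by
          rw [integral_finset_sum_measure (fun i _ => hinti i)]
      _ = inner ℂ ψ φ := by
          rw [L2.inner_def, ← hh]
          conv_rhs => rw [hμeq]
          rw [integral_smul_measure]
          rw [ENNReal.toReal_inv, ENNReal.toReal_natCast, Complex.real_smul]
          push_cast
          ring
  refine ContinuousLinearMap.ext fun φ => ?_
  refine ext_inner_left ℂ fun ψ => ?_
  rw [ContinuousLinearMap.one_apply, ContinuousLinearMap.sum_apply, inner_sum]
  simp_rw [ContinuousLinearMap.comp_apply, ContinuousLinearMap.adjoint_inner_right]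
  exact key φ ψ
end

section
/- Let E be a projection-valued measure on a Borel space Y with values in projections on a Hilbert space H, and let f, g : Y → ℝ be bounded Borel functions. Then ∫ f dE · ∫ g dE = ∫ fg dE (multiplicativity of the bounded functional calculus of a projection-valued measure). -/
open MeasureTheory ComplexConjugate
open scoped ENNReal NNReal

/-- A projection-valued measure on `Y` acting on the Hilbert space `H`. -/
structure PVM (Y : Type*) (H : Type*) [MeasurableSpace Y]
    [NormedAddCommGroup H] [InnerProductSpace ℂ H] [CompleteSpace H] where
  toFun : Set Y → (H →L[ℂ] H)
  selfAdj : ∀ s : Set Y, MeasurableSet s → IsSelfAdjoint (toFun s)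
  empty' : toFun ∅ = 0
  univ' : toFun Set.univ = 1
  inter_mul : ∀ s t : Set Y, MeasurableSet s → MeasurableSet t →
    toFun (s ∩ t) = toFun s ∘L toFun t
  weak_countably_additive : ∀ (g h : H) (s : ℕ → Set Y), (∀ n, MeasurableSet (s n)) →
    Pairwise (Function.onFun Disjoint s) →
    HasSum (fun n => (inner ℂ (toFun (s n) g) h : ℂ)) (inner ℂ (toFun (⋃ n, s n) g) h)

/-- `T` represents `∫ f dE`, where `ν u = ⟨E(·)u, u⟩` are the diagonal scalar measures
of the projection-valued measure: `T` is self-adjoint and `⟨T u, u⟩ = ∫ f dν_u`. -/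
def IsIntegralOp {Y H : Type*} [MeasurableSpace Y]
    [NormedAddCommGroup H] [InnerProductSpace ℂ H] [CompleteSpace H]
    (ν : H → Measure Y) (T : H →L[ℂ] H) (f : Y → ℝ) : Prop :=
  IsSelfAdjoint T ∧ ∀ u : H, ((inner ℂ (T u) u : ℂ)).re = ∫ y, f y ∂(ν u)

local notation "⟪" x ", " y "⟫" => @inner ℂ _ _ x y

section aux
variable {H : Type*} [NormedAddCommGroup H] [InnerProductSpace ℂ H] [CompleteSpace H]

lemma symm_of_sa {T : H →L[ℂ] H} (hT : IsSelfAdjoint T) (x y : H) :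
    ⟪T x, y⟫ = ⟪x, T y⟫ := hT.isSymmetric x y

lemma real_of_sa {T : H →L[ℂ] H} (hT : IsSelfAdjoint T) (x : H) :
    ⟪T x, x⟫ = ((⟪T x, x⟫).re : ℂ) := by
  refine (Complex.conj_eq_iff_re.mp ?_).symm
  rw [inner_conj_symm]
  exact (symm_of_sa hT x x).symm

lemma polar {T : H →L[ℂ] H} (hT : IsSelfAdjoint T) (v w : H) :
    ⟪T v, w⟫ = (⟪T (v + w), v + w⟫ - ⟪T (v - w), v - w⟫
      + Complex.I * (⟪T (v - Complex.I • w), v - Complex.I • w⟫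
        - ⟪T (v + Complex.I • w), v + Complex.I • w⟫)) / 4 := by
  have hc : ⟪T w, v⟫ = conj ⟪T v, w⟫ := by
    rw [symm_of_sa hT w v, ← inner_conj_symm]
  simp only [_root_.map_add, map_sub, _root_.map_smul, inner_add_left, inner_add_right,
    inner_sub_left, inner_sub_right, inner_smul_left, inner_smul_right, hc,
    Complex.conj_I, RingHom.map_sub, map_mul]
  set z := ⟪T v, w⟫ with hz
  simp only [Complex.ext_iff, Complex.add_re, Complex.sub_re, Complex.mul_re, Complex.div_re,
    Complex.add_im, Complex.sub_im, Complex.mul_im, Complex.div_im, Complex.conj_re,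
    Complex.conj_im, Complex.I_re, Complex.I_im, Complex.re_ofNat, Complex.im_ofNat,
    Complex.neg_re, Complex.neg_im, Complex.normSq_ofNat]
  norm_num
  constructor <;> ring

lemma integ_of_bdd {Y : Type*} [MeasurableSpace Y] {h : Y → ℝ} (hm : Measurable h) {C : ℝ}
    (hb : ∀ x, |h x| ≤ C) (μ : Measure Y) [IsFiniteMeasure μ] : Integrable h μ :=
  (integrable_const C).mono' hm.aestronglyMeasurable
    (ae_of_all _ fun x => by simpa [Real.norm_eq_abs] using hb x)

end aux


/-- Multiplicativity of the bounded functional calculus of a projection-valued measure: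
for bounded Borel `f, g : Y → ℝ`, `(∫ f dE)(∫ g dE) = ∫ fg dE`. -/
theorem stmt16 {Y H : Type*} [MeasurableSpace Y]
    [NormedAddCommGroup H] [InnerProductSpace ℂ H] [CompleteSpace H]
    (E : PVM Y H) (ν : H → Measure Y) [∀ u, IsFiniteMeasure (ν u)]
    (hν : ∀ (u : H) (s : Set Y), MeasurableSet s →
      (ν u s).toReal = ((inner ℂ (E.toFun s u) u : ℂ)).re)
    (f g : Y → ℝ) (hf : Measurable f) (hg : Measurable g)
    (hfb : ∃ C : ℝ, ∀ x, |f x| ≤ C) (hgb : ∃ C : ℝ, ∀ x, |g x| ≤ C)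
    (Tf Tg Tfg : H →L[ℂ] H)
    (hTf : IsIntegralOp ν Tf f) (hTg : IsIntegralOp ν Tg g)
    (hTfg : IsIntegralOp ν Tfg (fun x => f x * g x)) :
    Tf ∘L Tg = Tfg := by
  obtain ⟨Cf, hCf⟩ := hfb
  obtain ⟨Cg, hCg⟩ := hgb
  -- quadratic form values
  have qT : ∀ (T : H →L[ℂ] H) (h : Y → ℝ), IsIntegralOp ν T h → ∀ x : H,
      ⟪T x, x⟫ = ((∫ y, h y ∂ν x : ℝ) : ℂ) := by
    intro T h hT x
    rw [real_of_sa hT.1 x, hT.2 x]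
  have qE : ∀ (s : Set Y), MeasurableSet s → ∀ x : H,
      ⟪E.toFun s x, x⟫ = (((ν x s).toReal : ℝ) : ℂ) := by
    intro s hs x
    rw [real_of_sa (E.selfAdj s hs) x, hν x s hs]
  -- the key pointwise identity
  have key : ∀ u : H, ⟪Tf (Tg u), u⟫ = ⟪Tfg u, u⟫ := by
    intro u
    -- STEP A
    have hA : ∀ t : Set Y, MeasurableSet t →
        ⟪Tf (E.toFun t u), u⟫ = ((∫ y in t, f y ∂ν u : ℝ) : ℂ) := by
      intro t ht
      set a := E.toFun t u with ha
      have hx1 : ∀ s : Set Y, MeasurableSet s →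
          ⟪E.toFun s a, u⟫ = (((ν u (s ∩ t)).toReal : ℝ) : ℂ) := by
        intro s hs
        have h2 : E.toFun s a = E.toFun (s ∩ t) u := by
          rw [E.inter_mul s t hs ht]; rfl
        rw [h2, qE _ (hs.inter ht)]
      have hx2 : ∀ s : Set Y, MeasurableSet s →
          ⟪E.toFun s u, a⟫ = (((ν u (s ∩ t)).toReal : ℝ) : ℂ) := by
        intro s hs
        have h1 : ⟪E.toFun s u, a⟫ = ⟪E.toFun t (E.toFun s u), u⟫ :=
          (symm_of_sa (E.selfAdj t ht) _ u).symm
        have h2 : E.toFun t (E.toFun s u) = E.toFun (t ∩ s) u := by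
          rw [E.inter_mul t s ht hs]; rfl
        rw [h1, h2, qE _ (ht.inter hs), Set.inter_comm]
      -- measure identity 1
      have hm1 : ν (a + u) = ν (a - u) + (4 : ℝ≥0∞) • (ν u).restrict t := by
        ext s hs
        have c1 : ⟪E.toFun s (a + u), a + u⟫ =
            (((ν a s).toReal + (ν u s).toReal + 2 * (ν u (s ∩ t)).toReal : ℝ) : ℂ) := by
          rw [map_add, inner_add_left, inner_add_right, inner_add_right,
            qE s hs a, qE s hs u, hx1 s hs, hx2 s hs]
          push_cast; ring
        have c2 : ⟪E.toFun s (a - u), a - u⟫ =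
            (((ν a s).toReal + (ν u s).toReal - 2 * (ν u (s ∩ t)).toReal : ℝ) : ℂ) := by
          rw [map_sub, inner_sub_left, inner_sub_right, inner_sub_right,
            qE s hs a, qE s hs u, hx1 s hs, hx2 s hs]
          push_cast; ring
        have e1 : (ν (a + u) s).toReal
            = (ν a s).toReal + (ν u s).toReal + 2 * (ν u (s ∩ t)).toReal := by
          rw [hν (a + u) s hs, c1, Complex.ofReal_re]
        have e2 : (ν (a - u) s).toReal
            = (ν a s).toReal + (ν u s).toReal - 2 * (ν u (s ∩ t)).toReal := by
          rw [hν (a - u) s hs, c2, Complex.ofReal_re]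
        have hr : ((ν (a - u) + (4 : ℝ≥0∞) • (ν u).restrict t) s)
            = ν (a - u) s + 4 * ν u (s ∩ t) := by
          simp [Measure.restrict_apply hs, smul_eq_mul]
        rw [hr]
        refine (ENNReal.toReal_eq_toReal_iff' (measure_ne_top _ _) ?_).mp ?_
        · exact ENNReal.add_ne_top.mpr ⟨measure_ne_top _ _,
            ENNReal.mul_ne_top (by norm_num) (measure_ne_top _ _)⟩
        · rw [ENNReal.toReal_add (measure_ne_top _ _)
            (ENNReal.mul_ne_top (by norm_num) (measure_ne_top _ _)),
            ENNReal.toReal_mul, e1, e2]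
          norm_num
          ring
      -- measure identity 2
      have hm2 : ν (a + Complex.I • u) = ν (a - Complex.I • u) := by
        ext s hs
        refine (ENNReal.toReal_eq_toReal_iff' (measure_ne_top _ _) (measure_ne_top _ _)).mp ?_
        rw [hν _ s hs, hν _ s hs]
        have c : ⟪E.toFun s (a + Complex.I • u), a + Complex.I • u⟫
            = ⟪E.toFun s (a - Complex.I • u), a - Complex.I • u⟫ := by
          simp only [map_add, map_sub, _root_.map_smul, inner_add_left, inner_add_right,
            inner_sub_left, inner_sub_right, inner_smul_left, inner_smul_right,
            hx1 s hs, hx2 s hs, Complex.conj_I]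
          ring
        rw [c]
      -- conclude step A
      haveI hres : IsFiniteMeasure ((4 : ℝ≥0∞) • (ν u).restrict t) := by
        constructor
        rw [Measure.smul_apply, smul_eq_mul]
        exact ENNReal.mul_lt_top (by norm_num) (measure_lt_top _ _)
      have i1 : ∫ y, f y ∂ν (a + u) = ∫ y, f y ∂ν (a - u) + 4 * ∫ y in t, f y ∂ν u := by
        rw [hm1, integral_add_measure (integ_of_bdd hf hCf _) (integ_of_bdd hf hCf _),
          integral_smul_measure]
        norm_num
      have i2 : ∫ y, f y ∂ν (a - Complex.I • u) = ∫ y, f y ∂ν (a + Complex.I • u) := by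
        rw [hm2]
      rw [polar hTf.1 a u, qT Tf f hTf (a + u), qT Tf f hTf (a - u),
        qT Tf f hTf (a - Complex.I • u), qT Tf f hTf (a + Complex.I • u), i1, i2]
      push_cast
      ring
    -- STEP B
    have hy1 : ∀ s : Set Y, MeasurableSet s →
        ⟪E.toFun s u, Tf u⟫ = ((∫ y in s, f y ∂ν u : ℝ) : ℂ) := by
      intro s hs
      rw [← symm_of_sa hTf.1 (E.toFun s u) u]
      exact hA s hs
    have hy2 : ∀ s : Set Y, MeasurableSet s →
        ⟪E.toFun s (Tf u), u⟫ = ((∫ y in s, f y ∂ν u : ℝ) : ℂ) := by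
      intro s hs
      rw [symm_of_sa (E.selfAdj s hs) (Tf u) u, ← inner_conj_symm, hy1 s hs,
        Complex.conj_ofReal]
    set b := Tf u with hb
    -- densities for the positive and negative parts of f
    set μp : Measure Y := (ν u).withDensity (fun y => ((Real.toNNReal (f y) : ℝ≥0) : ℝ≥0∞))
      with hμp
    set μm : Measure Y := (ν u).withDensity (fun y => ((Real.toNNReal (-f y) : ℝ≥0) : ℝ≥0∞))
      with hμm
    have hofp : ∀ x : ℝ, ((Real.toNNReal x : ℝ≥0) : ℝ≥0∞) = ENNReal.ofReal x := fun x => rfl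
    haveI hfinp : IsFiniteMeasure μp := by
      constructor
      rw [hμp, withDensity_apply _ MeasurableSet.univ, Measure.restrict_univ]
      calc ∫⁻ y, ((Real.toNNReal (f y) : ℝ≥0) : ℝ≥0∞) ∂ν u
          ≤ ∫⁻ _, ENNReal.ofReal Cf ∂ν u := by
            refine lintegral_mono fun y => ?_
            rw [hofp]
            exact ENNReal.ofReal_le_ofReal ((le_abs_self _).trans (hCf y))
        _ < ⊤ := by
            rw [lintegral_const]
            exact ENNReal.mul_lt_top ENNReal.ofReal_lt_top (measure_lt_top _ _)
    haveI hfinm : IsFiniteMeasure μm := by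
      constructor
      rw [hμm, withDensity_apply _ MeasurableSet.univ, Measure.restrict_univ]
      calc ∫⁻ y, ((Real.toNNReal (-f y) : ℝ≥0) : ℝ≥0∞) ∂ν u
          ≤ ∫⁻ _, ENNReal.ofReal Cf ∂ν u := by
            refine lintegral_mono fun y => ?_
            rw [hofp]
            exact ENNReal.ofReal_le_ofReal (((le_abs_self _).trans_eq (abs_neg _)).trans (hCf y))
        _ < ⊤ := by
            rw [lintegral_const]
            exact ENNReal.mul_lt_top ENNReal.ofReal_lt_top (measure_lt_top _ _)
    have ofReal_max_zero : ∀ x : ℝ, ENNReal.ofReal (max x 0) = ENNReal.ofReal x := by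
      intro x
      rcases le_total x 0 with h | h
      · rw [max_eq_right h, ENNReal.ofReal_zero, (ENNReal.ofReal_eq_zero).mpr h]
      · rw [max_eq_left h]
    have hmaxb : ∀ x : Y, |max (f x) 0| ≤ Cf := fun x => by
      rw [abs_of_nonneg (le_max_right _ _)]
      exact max_le ((le_abs_self _).trans (hCf x)) ((abs_nonneg _).trans (hCf x))
    have hmaxb' : ∀ x : Y, |max (-f x) 0| ≤ Cf := fun x => by
      rw [abs_of_nonneg (le_max_right _ _)]
      exact max_le (((le_abs_self _).trans_eq (abs_neg _)).trans (hCf x))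
        ((abs_nonneg _).trans (hCf x))
    have hmaxm : Measurable fun y => max (f y) 0 := hf.max measurable_const
    have hmaxm' : Measurable fun y => max (-f y) 0 := hf.neg.max measurable_const
    have hsetp : ∀ s : Set Y, MeasurableSet s → (μp s).toReal = ∫ y in s, max (f y) 0 ∂ν u := by
      intro s hs
      rw [integral_eq_lintegral_of_nonneg_ae (f := fun y => max (f y) 0)
        (ae_of_all _ fun y => le_max_right _ _)
        hmaxm.aestronglyMeasurable, hμp, withDensity_apply _ hs]
      congr 1
      refine lintegral_congr fun y => ?_
      rw [hofp, ← ofReal_max_zero]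
    have hsetm : ∀ s : Set Y, MeasurableSet s → (μm s).toReal = ∫ y in s, max (-f y) 0 ∂ν u := by
      intro s hs
      rw [integral_eq_lintegral_of_nonneg_ae (f := fun y => max (-f y) 0)
        (ae_of_all _ fun y => le_max_right _ _)
        hmaxm'.aestronglyMeasurable, hμm, withDensity_apply _ hs]
      congr 1
      refine lintegral_congr fun y => ?_
      rw [hofp, ← ofReal_max_zero]
    have hdiff : ∀ s : Set Y, MeasurableSet s →
        (μp s).toReal - (μm s).toReal = ∫ y in s, f y ∂ν u := by
      intro s hs
      rw [hsetp s hs, hsetm s hs, ← integral_sub (integ_of_bdd hmaxm hmaxb _)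
        (integ_of_bdd hmaxm' hmaxb' _)]
      exact integral_congr_ae (ae_of_all _ fun y => max_zero_sub_max_neg_zero_eq_self _)
    -- measure identity 3
    have hm3 : ν (u + b) + (4 : ℝ≥0∞) • μm = ν (u - b) + (4 : ℝ≥0∞) • μp := by
      ext s hs
      have c1 : ⟪E.toFun s (u + b), u + b⟫ =
          (((ν u s).toReal + (ν b s).toReal + 2 * ∫ y in s, f y ∂ν u : ℝ) : ℂ) := by
        rw [map_add, inner_add_left, inner_add_right, inner_add_right,
          qE s hs u, qE s hs b, hy1 s hs, hy2 s hs]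
        push_cast; ring
      have c2 : ⟪E.toFun s (u - b), u - b⟫ =
          (((ν u s).toReal + (ν b s).toReal - 2 * ∫ y in s, f y ∂ν u : ℝ) : ℂ) := by
        rw [map_sub, inner_sub_left, inner_sub_right, inner_sub_right,
          qE s hs u, qE s hs b, hy1 s hs, hy2 s hs]
        push_cast; ring
      have e1 : (ν (u + b) s).toReal
          = (ν u s).toReal + (ν b s).toReal + 2 * ∫ y in s, f y ∂ν u := by
        rw [hν (u + b) s hs, c1, Complex.ofReal_re]
      have e2 : (ν (u - b) s).toReal
          = (ν u s).toReal + (ν b s).toReal - 2 * ∫ y in s, f y ∂ν u := by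
        rw [hν (u - b) s hs, c2, Complex.ofReal_re]
      simp only [Measure.add_apply, Measure.smul_apply, smul_eq_mul]
      refine (ENNReal.toReal_eq_toReal_iff'
        (ENNReal.add_ne_top.mpr ⟨measure_ne_top _ _,
          ENNReal.mul_ne_top (by norm_num) (measure_ne_top _ _)⟩)
        (ENNReal.add_ne_top.mpr ⟨measure_ne_top _ _,
          ENNReal.mul_ne_top (by norm_num) (measure_ne_top _ _)⟩)).mp ?_
      rw [ENNReal.toReal_add (measure_ne_top _ _)
          (ENNReal.mul_ne_top (by norm_num) (measure_ne_top _ _)),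
        ENNReal.toReal_add (measure_ne_top _ _)
          (ENNReal.mul_ne_top (by norm_num) (measure_ne_top _ _)),
        ENNReal.toReal_mul, ENNReal.toReal_mul, e1, e2]
      have := hdiff s hs
      norm_num
      linarith
    -- measure identity 4
    have hm4 : ν (u + Complex.I • b) = ν (u - Complex.I • b) := by
      ext s hs
      refine (ENNReal.toReal_eq_toReal_iff' (measure_ne_top _ _) (measure_ne_top _ _)).mp ?_
      rw [hν _ s hs, hν _ s hs]
      have c : ⟪E.toFun s (u + Complex.I • b), u + Complex.I • b⟫
          = ⟪E.toFun s (u - Complex.I • b), u - Complex.I • b⟫ := by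
        simp only [map_add, map_sub, _root_.map_smul, inner_add_left, inner_add_right,
          inner_sub_left, inner_sub_right, inner_smul_left, inner_smul_right,
          hy1 s hs, hy2 s hs, Complex.conj_I]
        ring
      rw [c]
    -- integrate g against the measure identities
    haveI : IsFiniteMeasure ((4 : ℝ≥0∞) • μm) := by
      constructor
      rw [Measure.smul_apply, smul_eq_mul]
      exact ENNReal.mul_lt_top (by norm_num) (measure_lt_top _ _)
    haveI : IsFiniteMeasure ((4 : ℝ≥0∞) • μp) := by
      constructor
      rw [Measure.smul_apply, smul_eq_mul]
      exact ENNReal.mul_lt_top (by norm_num) (measure_lt_top _ _)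
    have l1 : ∫ y, g y ∂(ν (u + b) + (4 : ℝ≥0∞) • μm)
        = ∫ y, g y ∂ν (u + b) + 4 * ∫ y, g y ∂μm := by
      rw [integral_add_measure (integ_of_bdd hg hCg _) (integ_of_bdd hg hCg _),
        integral_smul_measure]
      norm_num
    have l2 : ∫ y, g y ∂(ν (u - b) + (4 : ℝ≥0∞) • μp)
        = ∫ y, g y ∂ν (u - b) + 4 * ∫ y, g y ∂μp := by
      rw [integral_add_measure (integ_of_bdd hg hCg _) (integ_of_bdd hg hCg _),
        integral_smul_measure]
      norm_num
    have i3 : ∫ y, g y ∂ν (u + b) + 4 * ∫ y, g y ∂μm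
        = ∫ y, g y ∂ν (u - b) + 4 * ∫ y, g y ∂μp := by
      rw [← l1, ← l2, hm3]
    have ip : ∫ y, g y ∂μp = ∫ y, max (f y) 0 * g y ∂ν u := by
      rw [hμp, integral_withDensity_eq_integral_smul hf.real_toNNReal g]
      refine integral_congr_ae (ae_of_all _ fun y => ?_)
      simp [NNReal.smul_def, Real.coe_toNNReal']
    have im : ∫ y, g y ∂μm = ∫ y, max (-f y) 0 * g y ∂ν u := by
      rw [hμm, integral_withDensity_eq_integral_smul
        (show Measurable fun y => Real.toNNReal (-f y) from hf.neg.real_toNNReal) g]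
      refine integral_congr_ae (ae_of_all _ fun y => ?_)
      simp [NNReal.smul_def, Real.coe_toNNReal']
    have hmulb : ∀ x : Y, |max (f x) 0 * g x| ≤ Cf * Cg := fun x => by
      rw [abs_mul]
      exact mul_le_mul (hmaxb x) (hCg x) (abs_nonneg _) ((abs_nonneg _).trans (hCf x))
    have hmulb' : ∀ x : Y, |max (-f x) 0 * g x| ≤ Cf * Cg := fun x => by
      rw [abs_mul]
      exact mul_le_mul (hmaxb' x) (hCg x) (abs_nonneg _) ((abs_nonneg _).trans (hCf x))
    have ifg : ∫ y, g y ∂μp - ∫ y, g y ∂μm = ∫ y, f y * g y ∂ν u := by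
      rw [ip, im, ← integral_sub (integ_of_bdd (h := fun y => max (f y) 0 * g y) (hmaxm.mul hg) hmulb _)
        (integ_of_bdd (h := fun y => max (-f y) 0 * g y) (hmaxm'.mul hg) hmulb' _)]
      refine integral_congr_ae (ae_of_all _ fun y => ?_)
      simp only []
      rw [← sub_mul, max_zero_sub_max_neg_zero_eq_self]
    have hAB : (∫ y, g y ∂ν (u + b)) - ∫ y, g y ∂ν (u - b) = 4 * ∫ y, f y * g y ∂ν u := by
      rw [← ifg]; linarith
    have main : ⟪Tg u, b⟫ = ((∫ y, f y * g y ∂ν u : ℝ) : ℂ) := by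
      rw [polar hTg.1 u b, qT Tg g hTg (u + b), qT Tg g hTg (u - b),
        qT Tg g hTg (u - Complex.I • b), qT Tg g hTg (u + Complex.I • b), hm4]
      rw [sub_self, mul_zero, add_zero]
      rw [show ((∫ y, g y ∂ν (u + b) : ℝ) : ℂ) - ((∫ y, g y ∂ν (u - b) : ℝ) : ℂ)
          = (((4 : ℝ) * ∫ y, f y * g y ∂ν u : ℝ) : ℂ) from by rw [← hAB]; push_cast; ring]
      push_cast
      ring
    calc ⟪Tf (Tg u), u⟫ = ⟪Tg u, b⟫ := symm_of_sa hTf.1 (Tg u) u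
      _ = ((∫ y, f y * g y ∂ν u : ℝ) : ℂ) := main
      _ = ⟪Tfg u, u⟫ := (qT Tfg _ hTfg u).symm
  -- conclude
  refine ContinuousLinearMap.coe_injective ?_
  refine (ext_inner_map ((Tf ∘L Tg : H →L[ℂ] H) : H →ₗ[ℂ] H) (Tfg : H →ₗ[ℂ] H)).mp fun x => ?_
  simpa using key x
end

section
/- Let E be a finitely additive map from Borel sets of Y to positive bounded operators on H with E(Y) = id_H, and suppose E(C ∩ D) = E(C)E(D) for all closed sets C, D, and that for each h the measure ⟨E(·)h,h⟩ is inner regular by compact sets. Then E(Δ₁ ∩ Δ₂) = E(Δ₁)E(Δ₂) for all Borel sets Δ₁, Δ₂, hence E is a projection-valued measure. -/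
open MeasureTheory

/-- A positive operator-valued measure (weak countable additivity, total mass `id_H`). -/
structure POVM (Y : Type*) (H : Type*) [MeasurableSpace Y]
    [NormedAddCommGroup H] [InnerProductSpace ℂ H] [CompleteSpace H] where
  toFun : Set Y → (H →L[ℂ] H)
  pos : ∀ s : Set Y, MeasurableSet s → (toFun s).IsPositive
  empty' : toFun ∅ = 0
  univ' : toFun Set.univ = 1
  weak_countably_additive : ∀ (g h : H) (s : ℕ → Set Y), (∀ n, MeasurableSet (s n)) →
    Pairwise (Function.onFun Disjoint s) →
    HasSum (fun n => (inner ℂ (toFun (s n) g) h : ℂ)) (inner ℂ (toFun (⋃ n, s n) g) h)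

section Aux

variable {Y H : Type*} [MeasurableSpace Y]
    [NormedAddCommGroup H] [InnerProductSpace ℂ H] [CompleteSpace H]

/-- Finite additivity of a POVM. -/
lemma POVM.add' (E : POVM Y H) {s t : Set Y} (hs : MeasurableSet s) (ht : MeasurableSet t)
    (hd : Disjoint s t) : E.toFun (s ∪ t) = E.toFun s + E.toFun t := by
  have key : ∀ g h : H, (inner ℂ (E.toFun (s ∪ t) g) h : ℂ)
      = inner ℂ (E.toFun s g) h + inner ℂ (E.toFun t g) h := by
    intro g h
    set f : ℕ → Set Y := fun n => if n = 0 then s else if n = 1 then t else ∅ with hf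
    have hmeas : ∀ n, MeasurableSet (f n) := by
      intro n; simp only [hf]; split_ifs <;> simp [hs, ht]
    have hdisj : Pairwise (Function.onFun Disjoint f) := by
      intro i j hij
      simp only [Function.onFun, hf]
      split_ifs <;>
        first
          | exact absurd (by omega : i = j) hij
          | exact hd
          | exact hd.symm
          | exact Set.disjoint_empty _
          | exact Set.empty_disjoint _
    have hU : (⋃ n, f n) = s ∪ t := by
      apply Set.Subset.antisymm
      · refine Set.iUnion_subset fun n => ?_
        simp only [hf]; split_ifs <;> simp
      · rintro x (h | h)
        · exact Set.mem_iUnion.2 ⟨0, by simp [hf, h]⟩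
        · exact Set.mem_iUnion.2 ⟨1, by simp [hf, h]⟩
    have h1 := E.weak_countably_additive g h f hmeas hdisj
    rw [hU] at h1
    have h2 : HasSum (fun n => (inner ℂ (E.toFun (f n) g) h : ℂ))
        (∑ n ∈ ({0, 1} : Finset ℕ), (inner ℂ (E.toFun (f n) g) h : ℂ)) := by
      apply hasSum_sum_of_ne_finset_zero
      intro n hn
      simp only [Finset.mem_insert, Finset.mem_singleton] at hn
      push_neg at hn
      have hfn : f n = ∅ := by
        simp only [hf]; rw [if_neg hn.1, if_neg hn.2]
      simp [hfn, E.empty']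
    have h3 := h1.unique h2
    rw [h3, Finset.sum_pair (by norm_num : (0 : ℕ) ≠ 1)]
    simp [hf]
  ext g
  apply ext_inner_right ℂ
  intro h
  rw [key g h]
  simp [inner_add_left]

lemma POVM.sub' (E : POVM Y H) {s t : Set Y} (hs : MeasurableSet s) (ht : MeasurableSet t)
    (hsub : s ⊆ t) : E.toFun t - E.toFun s = E.toFun (t \ s) := by
  have h1 : E.toFun t = E.toFun s + E.toFun (t \ s) := by
    rw [← E.add' hs (ht.diff hs) disjoint_sdiff_self_right, Set.union_diff_cancel hsub]
  rw [h1, add_sub_cancel_left]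

lemma POVM.mono_pos (E : POVM Y H) {s t : Set Y} (hs : MeasurableSet s) (ht : MeasurableSet t)
    (hsub : s ⊆ t) : (E.toFun t - E.toFun s).IsPositive := by
  rw [E.sub' hs ht hsub]
  exact E.pos _ (ht.diff hs)

lemma POVM.one_sub_pos (E : POVM Y H) {s : Set Y} (hs : MeasurableSet s) :
    ((1 : H →L[ℂ] H) - E.toFun s).IsPositive := by
  rw [← E.univ']
  exact E.mono_pos hs MeasurableSet.univ (Set.subset_univ s)

lemma POVM.mono_re (E : POVM Y H) {s t : Set Y} (hs : MeasurableSet s) (ht : MeasurableSet t)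
    (hsub : s ⊆ t) (x : H) :
    (inner ℂ (E.toFun s x) x : ℂ).re ≤ (inner ℂ (E.toFun t x) x : ℂ).re := by
  have h := (E.mono_pos hs ht hsub).inner_nonneg_left x
  simp only [ContinuousLinearMap.sub_apply, inner_sub_left, map_sub,
    RCLike.re_to_complex] at h
  have h := (Complex.le_def.1 h).1
  simp only [Complex.zero_re, Complex.sub_re] at h
  linarith

/-- For a positive contraction (`0 ≤ T ≤ 1`), `‖T x‖ ^ 2 ≤ re ⟪T x, x⟫`. -/
lemma pos_contraction_norm_sq_le {T : H →L[ℂ] H} (hT : T.IsPositive)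
    (h1 : ((1 : H →L[ℂ] H) - T).IsPositive) (x : H) :
    ‖T x‖ ^ 2 ≤ (inner ℂ (T x) x : ℂ).re := by
  have hb : (inner ℂ (T x) (T x) : ℂ).re = ‖T x‖ ^ 2 := by
    simpa using inner_self_eq_norm_sq (𝕜 := ℂ) (T x)
  have hc : (inner ℂ (T (T x)) (T x) : ℂ).re ≤ ‖T x‖ ^ 2 := by
    have h := h1.inner_nonneg_left (T x)
    simp only [ContinuousLinearMap.sub_apply, ContinuousLinearMap.one_apply,
      inner_sub_left, map_sub, RCLike.re_to_complex] at h
    have h := (Complex.le_def.1 h).1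
    simp only [Complex.zero_re, Complex.sub_re] at h
    linarith
  have hTT : (inner ℂ (T (T x)) x : ℂ) = inner ℂ (T x) (T x) := by
    nth_rewrite 1 [← hT.isSelfAdjoint.adjoint_eq]
    exact ContinuousLinearMap.adjoint_inner_left T x (T x)
  have hq := hT.inner_nonneg_left (x - T x)
  simp only [map_sub, inner_sub_left, inner_sub_right, RCLike.re_to_complex] at hq
  rw [hTT] at hq
  have hq := (Complex.le_def.1 hq).1
  simp only [Complex.zero_re, Complex.sub_re] at hq
  linarith

/-- A POVM element is a contraction. -/
lemma POVM.norm_apply_le (E : POVM Y H) {s : Set Y} (hs : MeasurableSet s) (w : H) :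
    ‖E.toFun s w‖ ≤ ‖w‖ := by
  have h1 := pos_contraction_norm_sq_le (E.pos s hs) (E.one_sub_pos hs) w
  have h2 : (inner ℂ (E.toFun s w) w : ℂ).re ≤ ‖w‖ ^ 2 := by
    have h := (E.one_sub_pos hs).inner_nonneg_left w
    have hw : (inner ℂ w w : ℂ).re = ‖w‖ ^ 2 := by
      simpa using inner_self_eq_norm_sq (𝕜 := ℂ) w
    simp only [ContinuousLinearMap.sub_apply, ContinuousLinearMap.one_apply,
      inner_sub_left, map_sub, RCLike.re_to_complex] at h
    have h := (Complex.le_def.1 h).1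
    simp only [Complex.zero_re, Complex.sub_re] at h
    linarith
  have := h1.trans h2
  nlinarith [norm_nonneg (E.toFun s w), norm_nonneg w]

/-- The key estimate: the defect of a sub-event controls the norm of the difference. -/
lemma POVM.defect_bound (E : POVM Y H) {A B : Set Y} (hA : MeasurableSet A)
    (hB : MeasurableSet B) (hsub : A ⊆ B) (x : H) :
    ‖E.toFun B x - E.toFun A x‖ ^ 2
      ≤ (inner ℂ (E.toFun B x) x : ℂ).re - (inner ℂ (E.toFun A x) x : ℂ).re := by
  have hpos : (E.toFun B - E.toFun A).IsPositive := E.mono_pos hA hB hsub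
  have h1pos : ((1 : H →L[ℂ] H) - (E.toFun B - E.toFun A)).IsPositive := by
    rw [E.sub' hA hB hsub]
    exact E.one_sub_pos (hB.diff hA)
  have h := pos_contraction_norm_sq_le hpos h1pos x
  simpa only [ContinuousLinearMap.sub_apply, inner_sub_left, map_sub,
    RCLike.re_to_complex, Complex.sub_re] using h
end Aux

/-- If a positive operator-valued measure `E` on a complete separable metric space is
multiplicative on intersections of closed sets, and each diagonal scalar measure
`⟨E(·)h, h⟩` is inner regular by compact sets, then `E` is multiplicative on
intersections of arbitrary Borel sets, i.e. `E` is a projection-valued measure. -/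
theorem stmt17 {Y H : Type*} [MetricSpace Y] [CompleteSpace Y]
    [TopologicalSpace.SeparableSpace Y] [MeasurableSpace Y] [BorelSpace Y]
    [NormedAddCommGroup H] [InnerProductSpace ℂ H] [CompleteSpace H]
    (E : POVM Y H)
    (hclosed : ∀ C D : Set Y, IsClosed C → IsClosed D →
      E.toFun (C ∩ D) = E.toFun C ∘L E.toFun D)
    (hreg : ∀ s : Set Y, MeasurableSet s → ∀ h : H, ∀ ε > (0 : ℝ),
      ∃ C ⊆ s, IsCompact C ∧
        ((inner ℂ (E.toFun s h) h : ℂ)).re - ((inner ℂ (E.toFun C h) h : ℂ)).re < ε) :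
    ∀ s t : Set Y, MeasurableSet s → MeasurableSet t →
      E.toFun (s ∩ t) = E.toFun s ∘L E.toFun t := by
  intro s t hs ht
  have hst : MeasurableSet (s ∩ t) := hs.inter ht
  ext x
  rw [ContinuousLinearMap.comp_apply]
  have key : ∀ ε > (0 : ℝ), ‖E.toFun (s ∩ t) x - E.toFun s (E.toFun t x)‖ ≤ ε := by
    intro ε hε
    have hδ : (0 : ℝ) < (ε / 3) ^ 2 := by positivity
    set δ : ℝ := (ε / 3) ^ 2 with hδdef
    set v : H := E.toFun t x with hv
    obtain ⟨K, hKsub, hKcomp, hKlt⟩ := hreg (s ∩ t) hst x δ hδ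
    obtain ⟨C₀, hC₀sub, hC₀comp, hC₀lt⟩ := hreg s hs v δ hδ
    obtain ⟨D₀, hD₀sub, hD₀comp, hD₀lt⟩ := hreg t ht x δ hδ
    set C : Set Y := C₀ ∪ K with hC
    set D : Set Y := D₀ ∪ K with hD
    have hCcomp : IsCompact C := hC₀comp.union hKcomp
    have hDcomp : IsCompact D := hD₀comp.union hKcomp
    have hCm : MeasurableSet C := hCcomp.isClosed.measurableSet
    have hDm : MeasurableSet D := hDcomp.isClosed.measurableSet
    have hKm : MeasurableSet K := hKcomp.isClosed.measurableSet
    have hCsub : C ⊆ s := Set.union_subset hC₀sub (hKsub.trans Set.inter_subset_left)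
    have hDsub : D ⊆ t := Set.union_subset hD₀sub (hKsub.trans Set.inter_subset_right)
    have hCDm : MeasurableSet (C ∩ D) := hCm.inter hDm
    have hKCD : K ⊆ C ∩ D :=
      Set.subset_inter Set.subset_union_right Set.subset_union_right
    have hprod : E.toFun (C ∩ D) x = E.toFun C (E.toFun D x) := by
      rw [hclosed C D hCcomp.isClosed hDcomp.isClosed]; rfl
    -- bound 1
    have hb1 : ‖E.toFun (s ∩ t) x - E.toFun (C ∩ D) x‖ ≤ ε / 3 := by
      have h1 := E.defect_bound hCDm hst (Set.inter_subset_inter hCsub hDsub) x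
      have h2 := E.mono_re hKm hCDm hKCD x
      have : ‖E.toFun (s ∩ t) x - E.toFun (C ∩ D) x‖ ^ 2 < δ := by linarith
      have := lt_of_pow_lt_pow_left₀ 2 (by positivity) (this.trans_eq hδdef)
      linarith
    -- bound 3
    have hb3 : ‖E.toFun s v - E.toFun C v‖ ≤ ε / 3 := by
      have h1 := E.defect_bound hCm hs hCsub v
      have h2 := E.mono_re (hC₀comp.isClosed.measurableSet) hCm
        (Set.subset_union_left) v
      have : ‖E.toFun s v - E.toFun C v‖ ^ 2 < δ := by linarith
      have := lt_of_pow_lt_pow_left₀ 2 (by positivity) (this.trans_eq hδdef)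
      linarith
    -- bound 2
    have hb2 : ‖E.toFun C (E.toFun D x) - E.toFun C (E.toFun t x)‖ ≤ ε / 3 := by
      have hle : ‖E.toFun t x - E.toFun D x‖ ≤ ε / 3 := by
        have h1 := E.defect_bound hDm ht hDsub x
        have h2 := E.mono_re (hD₀comp.isClosed.measurableSet) hDm
          (Set.subset_union_left) x
        have : ‖E.toFun t x - E.toFun D x‖ ^ 2 < δ := by linarith
        have := lt_of_pow_lt_pow_left₀ 2 (by positivity) (this.trans_eq hδdef)
        linarith
      calc ‖E.toFun C (E.toFun D x) - E.toFun C (E.toFun t x)‖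
          = ‖E.toFun C (E.toFun D x - E.toFun t x)‖ := by rw [map_sub]
        _ ≤ ‖E.toFun D x - E.toFun t x‖ := E.norm_apply_le hCm _
        _ = ‖E.toFun t x - E.toFun D x‖ := norm_sub_rev _ _
        _ ≤ ε / 3 := hle
    have hdecomp : E.toFun (s ∩ t) x - E.toFun s (E.toFun t x)
        = (E.toFun (s ∩ t) x - E.toFun (C ∩ D) x)
          + (E.toFun C (E.toFun D x) - E.toFun C (E.toFun t x))
          + (E.toFun C (E.toFun t x) - E.toFun s (E.toFun t x)) := by
      rw [hprod]; abel
    rw [hdecomp]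
    calc ‖_ + _ + _‖ ≤ ‖E.toFun (s ∩ t) x - E.toFun (C ∩ D) x‖
          + ‖E.toFun C (E.toFun D x) - E.toFun C (E.toFun t x)‖
          + ‖E.toFun C (E.toFun t x) - E.toFun s (E.toFun t x)‖ := norm_add₃_le
      _ ≤ ε / 3 + ε / 3 + ε / 3 := by
          have : ‖E.toFun C (E.toFun t x) - E.toFun s (E.toFun t x)‖
              = ‖E.toFun s v - E.toFun C v‖ := by rw [norm_sub_rev, hv]
          rw [this]
          exact add_le_add (add_le_add hb1 hb2) hb3
      _ = ε := by ring
  have hle0 : ‖E.toFun (s ∩ t) x - E.toFun s (E.toFun t x)‖ ≤ 0 :=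
    le_of_forall_gt_imp_ge_of_dense fun ε hε => key ε hε
  have := le_antisymm hle0 (norm_nonneg _)
  rw [norm_eq_zero, sub_eq_zero] at this
  exact this
end

section
/- Let {σ_0,…,σ_{N−1}} be Lipschitz contractions on a complete metric space Y with attractor X and Hutchinson measure μ, let F_i : L²(Y,μ) → L²(Y,μ) be F_i(φ) = (1/√N)(φ∘σ_i), and let B be a positive operator-valued measure on Y with values in B(L²(Y,μ)) and B(Y) = id. Then V(B)(Δ) := ∑_{i=0}^{N−1} F_i* B(σ_i^{-1}(Δ)) F_i defines a positive operator-valued measure on Y with V(B)(Y) = id (i.e. the Hutchinson-type transfer operator maps POVMs to POVMs). -/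
open MeasureTheory

/-- The Hutchinson-type transfer operator maps POVMs to POVMs: if `{σ_0,…,σ_{N−1}}` is an
IFS of Lipschitz contractions on a complete separable metric space `Y` with attractor `X`
and Hutchinson measure `μ`, `Fᵢ φ = (1/√N)(φ ∘ σᵢ)` on `L²(Y,μ)` (so `∑ Fᵢ*Fᵢ = id`), and
`B` is a positive operator-valued measure on `Y` acting on `L²(Y,μ)` with `B(Y) = id`, then
`Δ ↦ ∑ᵢ Fᵢ* B(σᵢ⁻¹(Δ)) Fᵢ` is again a positive operator-valued measure with total mass `id`. -/
theorem stmt19 {Y : Type*} [MetricSpace Y] [CompleteSpace Y]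
    [TopologicalSpace.SeparableSpace Y] [MeasurableSpace Y] [BorelSpace Y]
    (N : ℕ) (hN : 2 ≤ N) (σ : Fin N → Y → Y)
    (hσ : ∀ i, ∃ r : NNReal, r < 1 ∧ LipschitzWith r (σ i))
    (X : Set Y) (hX : IsCompact X) (hXne : X.Nonempty) (hXinv : X = ⋃ i, σ i '' X)
    (μ : Measure Y) [IsProbabilityMeasure μ] (hsupp : μ X = 1)
    (hinv : ∀ s : Set Y, MeasurableSet s → μ s = (∑ i, μ (σ i ⁻¹' s)) / N)
    (F : Fin N → (Lp ℂ 2 μ →L[ℂ] Lp ℂ 2 μ))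
    (hF : ∀ (i : Fin N) (φ : Lp ℂ 2 μ),
      (F i φ : Y → ℂ) =ᵐ[μ] fun x => ((Real.sqrt N : ℂ))⁻¹ * (φ : Y → ℂ) (σ i x))
    (hsum : ∑ i, (ContinuousLinearMap.adjoint (F i)) ∘L (F i) = 1)
    (B : POVM Y (Lp ℂ 2 μ)) :
    ∃ V : POVM Y (Lp ℂ 2 μ), ∀ s : Set Y,
      V.toFun s = ∑ i, (ContinuousLinearMap.adjoint (F i)) ∘L B.toFun (σ i ⁻¹' s) ∘L F i := by
  have hσmeas : ∀ i, Measurable (σ i) := fun i => by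
    obtain ⟨r, _, hr⟩ := hσ i
    exact hr.continuous.measurable
  refine ⟨⟨fun s => ∑ i, (ContinuousLinearMap.adjoint (F i)) ∘L B.toFun (σ i ⁻¹' s) ∘L F i,
    ?_, ?_, ?_, ?_⟩, fun s => rfl⟩
  · intro s hs
    refine Finset.sum_induction _ _ (fun a b ha hb => ha.add hb)
      ContinuousLinearMap.isPositive_zero (fun i _ =>
      (B.pos _ ((hσmeas i) hs)).adjoint_conj (F i))
  · simp [Set.preimage_empty, B.empty']
  · simp only [Set.preimage_univ, B.univ', ContinuousLinearMap.comp_id,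
      ContinuousLinearMap.id_comp]
    simpa [ContinuousLinearMap.one_def] using hsum
  · intro g h s hmeas hdisj
    have key : ∀ i : Fin N,
        HasSum (fun n => (inner ℂ ((ContinuousLinearMap.adjoint (F i) ∘L
            B.toFun (σ i ⁻¹' s n) ∘L F i) g) h : ℂ))
          (inner ℂ ((ContinuousLinearMap.adjoint (F i) ∘L
            B.toFun (σ i ⁻¹' (⋃ n, s n)) ∘L F i) g) h) := by
      intro i
      have := B.weak_countably_additive (F i g) (F i h) (fun n => σ i ⁻¹' s n)
        (fun n => (hσmeas i) (hmeas n))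
        (fun m n hmn => Disjoint.preimage _ (hdisj hmn))
      simp only [ContinuousLinearMap.comp_apply, ContinuousLinearMap.adjoint_inner_left,
        Set.preimage_iUnion]
      exact this
    have hsum' := hasSum_sum (fun i (_ : i ∈ Finset.univ) => key i)
    simpa only [← sum_inner, ← ContinuousLinearMap.sum_apply] using hsum'
end
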